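/- Let N channels have rates r_i > 0 and availability probabilities p_i ∈ (0,1], let Δ > 0, and suppose channel i* uniquely maximizes throughput (r_{i*} p_{i*} > r_j p_j for all j ≠ i*). Let F satisfy kΔr_{i*} < F < (k+1)Δr_{i*} for some k ∈ ℕ, and let E[T(π*,F)] = min_{π ∈ Π(F)} E[T(π,F)]. Then E[T(π*,F)] / E[T(i*,F)] ≥ F / ( F + Δ(1−p_{i*}) r_{i*} ), where E[T(i*,F)] is the expected static transfer time of channel i*. -/

import Mathlib

/-- Expected static transfer time of a file of size `F` over a Bernoulli channel with
rate `r`, availability probability `p`, and slot duration `Δ`: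
`E[T] = Δ(k/p + 1{α>0}(1-p)/p + α)` where `k = ⌊F/(Δr)⌋` and `α = F/(Δr) - k`. -/
noncomputable def ET (Δ r p F : ℝ) : ℝ :=
  Δ * ((⌊F / (Δ * r)⌋₊ : ℝ) / p
    + (if 0 < F / (Δ * r) - (⌊F / (Δ * r)⌋₊ : ℝ) then (1 - p) / p else 0)
    + (F / (Δ * r) - (⌊F / (Δ * r)⌋₊ : ℝ)))

/-- A dynamic policy for transferring a file of size `F` over `N` channels with rates
`r` in slots of duration `Δ`. -/
structure Policy (N : ℕ) (r : Fin N → ℝ) (Δ F : ℝ) where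
  L : ℕ
  hL : 0 < L
  chan : ℕ → Fin N
  pos : ∀ n < L, 0 < F - Δ * ∑ m ∈ Finset.range n, r (chan m)
  last : F - Δ * ∑ m ∈ Finset.range (L - 1), r (chan m) ≤ Δ * r (chan (L - 1))

/-- Closed-form expected transfer time of a dynamic policy `π`. -/
noncomputable def ETdyn {N : ℕ} {r : Fin N → ℝ} {Δ F : ℝ} (p : Fin N → ℝ)
    (π : Policy N r Δ F) : ℝ :=
  Δ * ((∑ n ∈ Finset.range (π.L - 1), 1 / p (π.chan n))
      + (1 - p (π.chan (π.L - 1))) / p (π.chan (π.L - 1)))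
    + (F - Δ * ∑ m ∈ Finset.range (π.L - 1), r (π.chan m)) / r (π.chan (π.L - 1))

/-!
Charge every full slot of a dynamic policy on channel `j` its expected cost `Δ / p j`: since
`r j * p j ≤ r i⋆ * p i⋆`, this is at least the time `Δ * r j / (r i⋆ * p i⋆)` that the
throughput `r i⋆ * p i⋆` needs for the same data. The last, partial slot carrying `R ≤ Δ * r j`
costs `Δ * (1 - p j) / p j + R / r j`, again at least `R / (r i⋆ * p i⋆)`. So every policy, the
optimal one included, takes at least `F / (r i⋆ * p i⋆)`. The static policy on `i⋆` exceeds this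
by at most `Δ * (1 - p i⋆) / p i⋆`, one extra expected wait for the partial last slot.
-/

open Finset

section Static

variable {Δ r p F : ℝ}

theorem div_le_ET (hΔ : 0 < Δ) (hr : 0 < r) (hp : p ∈ Set.Ioc 0 1) :
    F / r ≤ ET Δ r p F := by
  obtain ⟨hp0, hp1⟩ := hp
  set x := F / (Δ * r)
  have hFx : F / r = Δ * x := by
    simp only [x]
    field_simp
  have hk : (⌊x⌋₊ : ℝ) ≤ ⌊x⌋₊ / p := le_div_self (Nat.cast_nonneg _) hp0 hp1
  have hind : 0 ≤ if 0 < x - ⌊x⌋₊ then (1 - p) / p else 0 := by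
    split_ifs
    exacts [div_nonneg (sub_nonneg.2 hp1) hp0.le, le_rfl]
  rw [hFx, ET]
  gcongr
  linarith

theorem ET_le (hΔ : 0 < Δ) (hr : 0 < r) (hp : p ∈ Set.Ioc 0 1) (hF : 0 ≤ F) :
    ET Δ r p F ≤ (F + Δ * (1 - p) * r) / (r * p) := by
  obtain ⟨hp0, hp1⟩ := hp
  set x := F / (Δ * r)
  have hfloor : (⌊x⌋₊ : ℝ) ≤ x := Nat.floor_le (by positivity)
  have hFx : F = Δ * r * x := by
    simp only [x]
    field_simp
  rw [ET, le_div_iff₀ (by positivity)]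
  -- scaled by `r * p / (Δ * r)`, with `α = x - ⌊x⌋₊ ≥ 0`:
  -- `⌊x⌋₊ + 1{α > 0} (1 - p) + α p ≤ x + 1 - p`
  have key : ((⌊x⌋₊ : ℝ) / p + (if 0 < x - ⌊x⌋₊ then (1 - p) / p else 0) + (x - ⌊x⌋₊)) * p
      ≤ x + (1 - p) := by
    split_ifs <;> field_simp <;> nlinarith
  calc Δ * ((⌊x⌋₊ : ℝ) / p + (if 0 < x - ⌊x⌋₊ then (1 - p) / p else 0) + (x - ⌊x⌋₊)) * (r * p)
      = Δ * r * (((⌊x⌋₊ : ℝ) / p + (if 0 < x - ⌊x⌋₊ then (1 - p) / p else 0)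
          + (x - ⌊x⌋₊)) * p) := by ring
    _ ≤ Δ * r * (x + (1 - p)) := by gcongr
    _ = F + Δ * (1 - p) * r := by rw [hFx]; ring

end Static

theorem div_le_last_slot_cost {Δ R s q c : ℝ} (hs : 0 < s) (hq : q ∈ Set.Ioc 0 1) (hR : 0 ≤ R)
    (hRs : R ≤ Δ * s) (hc : s * q ≤ c) :
    R / c ≤ Δ * ((1 - q) / q) + R / s := by
  obtain ⟨hq0, hq1⟩ := hq
  calc R / c ≤ R / (s * q) := div_le_div_of_nonneg_left hR (by positivity) hc
    _ ≤ Δ * ((1 - q) / q) + R / s := by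
      have hgap : Δ * ((1 - q) / q) + R / s - R / (s * q) = (1 - q) * (Δ * s - R) / (s * q) := by
        field_simp
        ring
      have hgap_nonneg : 0 ≤ (1 - q) * (Δ * s - R) / (s * q) :=
        div_nonneg (mul_nonneg (by linarith) (by linarith)) (by positivity)
      linarith

namespace Policy

variable {N : ℕ} {r : Fin N → ℝ} {Δ F : ℝ}

theorem size_pos (π : Policy N r Δ F) : 0 < F := by
  simpa using π.pos 0 π.hL

theorem div_le_ETdyn {p : Fin N → ℝ} (hΔ : 0 < Δ) (hr : ∀ i, 0 < r i)
    (hp : ∀ i, p i ∈ Set.Ioc 0 1) {i : Fin N} (hmax : ∀ j, r j * p j ≤ r i * p i)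
    (π : Policy N r Δ F) :
    F / (r i * p i) ≤ ETdyn p π := by
  set S := Δ * ∑ m ∈ range (π.L - 1), r (π.chan m)
  have hfull : S / (r i * p i) ≤ Δ * ∑ n ∈ range (π.L - 1), 1 / p (π.chan n) := by
    simp only [S, mul_sum, sum_div]
    refine sum_le_sum fun n _ => ?_
    obtain ⟨hp0, -⟩ := hp (π.chan n)
    rw [mul_one_div, div_le_div_iff₀ (mul_pos (hr i) (hp i).1) hp0]
    nlinarith [hmax (π.chan n)]
  have hlast := div_le_last_slot_cost (hr _) (hp _) (π.pos _ (by have := π.hL; omega)).le π.last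
    (hmax (π.chan (π.L - 1)))
  calc F / (r i * p i) = S / (r i * p i) + (F - S) / (r i * p i) := by ring
    _ ≤ ETdyn p π := by
      rw [ETdyn]
      linarith

end Policy

theorem dynamic_optimal_ratio_lower_bound_general
    {N : ℕ} (r p : Fin N → ℝ) (Δ : ℝ) (hΔ : 0 < Δ)
    (hr : ∀ i, 0 < r i) (hp : ∀ i, p i ∈ Set.Ioc (0 : ℝ) 1)
    (istar : Fin N) (hstar : ∀ j, j ≠ istar → r j * p j < r istar * p istar)
    (F : ℝ) (Topt : ℝ)
    (hopt : IsLeast {t : ℝ | ∃ π : Policy N r Δ F, t = ETdyn p π} Topt) :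
    F / (F + Δ * (1 - p istar) * r istar)
      ≤ Topt / ET Δ (r istar) (p istar) F := by
  obtain ⟨⟨π, rfl⟩, -⟩ := hopt
  have hmax : ∀ j, r j * p j ≤ r istar * p istar := fun j => by
    rcases eq_or_ne j istar with rfl | hj
    exacts [le_rfl, (hstar j hj).le]
  have hF := π.size_pos
  have hrp : 0 < r istar * p istar := mul_pos (hr istar) (hp istar).1
  have hlower := π.div_le_ETdyn hΔ hr hp hmax
  have hupper := ET_le hΔ (hr istar) (hp istar) hF.le
  have hstatic : 0 < ET Δ (r istar) (p istar) F :=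
    (div_pos hF (hr istar)).trans_le (div_le_ET hΔ (hr istar) (hp istar))
  calc F / (F + Δ * (1 - p istar) * r istar)
      = F / (r istar * p istar) / ((F + Δ * (1 - p istar) * r istar) / (r istar * p istar)) := by
        rw [div_div_div_cancel_right₀ hrp.ne']
    _ ≤ ETdyn p π / ((F + Δ * (1 - p istar) * r istar) / (r istar * p istar)) :=
        div_le_div_of_nonneg_right hlower (hstatic.le.trans hupper)
    _ ≤ ETdyn p π / ET Δ (r istar) (p istar) F :=
        div_le_div_of_nonneg_left ((div_pos hF hrp).le.trans hlower) hstatic hupper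

/-- Lower bound on the performance of the dynamic optimal policy relative to the
max-throughput policy: if `i⋆` uniquely maximizes throughput and
`kΔr_{i⋆} < F < (k+1)Δr_{i⋆}`, then, with `E[T(π⋆,F)] = min_{π ∈ Π(F)} E[T(π,F)]`,
`E[T(π⋆,F)]/E[T(i⋆,F)] ≥ F/(F + Δ(1-p_{i⋆})r_{i⋆})`. -/
theorem dynamic_optimal_ratio_lower_bound
    {N : ℕ} (r p : Fin N → ℝ) (Δ : ℝ) (hΔ : 0 < Δ)
    (hr : ∀ i, 0 < r i) (hp : ∀ i, p i ∈ Set.Ioc (0 : ℝ) 1)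
    (istar : Fin N) (hstar : ∀ j, j ≠ istar → r j * p j < r istar * p istar)
    (F : ℝ) (k : ℕ) (hFlb : (k : ℝ) * Δ * r istar < F)
    (hFub : F < ((k : ℝ) + 1) * Δ * r istar)
    (Topt : ℝ)
    (hopt : IsLeast {t : ℝ | ∃ π : Policy N r Δ F, t = ETdyn p π} Topt) :
    F / (F + Δ * (1 - p istar) * r istar)
      ≤ Topt / ET Δ (r istar) (p istar) F :=
  dynamic_optimal_ratio_lower_bound_general r p Δ hΔ hr hp istar hstar F Topt hopt
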